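/- arXiv:math/0505426 — 2 statements merged into one kernel-verified Lean document; each statement's English description precedes it below -/
import Mathlib

section
/- Let L be a lattice, let M be a cancellative commutative monoid, and let μ : Dim L → M be a monoid homomorphism that separates zero, i.e. μ(d) = 0 implies d = 0 for all d ∈ Dim L. Then L is modular. (Consequently, in the pentagon configuration o ≤ c ≤ a ≤ i, a ∧ b = o, b ∨ c = i, one must have a = c.) -/
/-!
For `x ≤ z` put `c = x ⊔ (y ⊓ z) ≤ a = (x ⊔ y) ⊓ z`. Then `a ⊓ y = c ⊓ y = y ⊓ z` and
`a ⊔ y = c ⊔ y = x ⊔ y`, so (D1) and (D2) give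
`Δ(y ⊓ z, c) + Δ(c, a) = Δ(y ⊓ z, a) = Δ(y, x ⊔ y) = Δ(y ⊓ z, c)`.
Cancelling in the target of `μ` and separating zero yields `Δ(c, a) = 0`, and `Δ(c, a)` vanishes only
when `c = a`, as the homomorphism `Δ(u, v) ↦ [u ≠ v]` into the two-element semilattice shows.
-/

section Dim

variable (L : Type*) [Lattice L]

/-- Generators of the dimension monoid: pairs `x ≤ y` in `L`. -/
abbrev DimGen := {p : L × L // p.1 ≤ p.2}

/-- The free commutative monoid on the generators. -/
abbrev DimFree := DimGen L →₀ ℕ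

/-- The defining relations (D0), (D1), (D2) of the dimension monoid. -/
inductive DimRel : DimFree L → DimFree L → Prop
  | d0 (x : L) : DimRel (Finsupp.single ⟨(x, x), le_rfl⟩ 1) 0
  | d1 (x y z : L) (hxy : x ≤ y) (hyz : y ≤ z) :
      DimRel (Finsupp.single ⟨(x, z), hxy.trans hyz⟩ 1)
        (Finsupp.single ⟨(x, y), hxy⟩ 1 + Finsupp.single ⟨(y, z), hyz⟩ 1)
  | d2 (x y : L) : DimRel (Finsupp.single ⟨(x ⊓ y, x), inf_le_left⟩ 1)
        (Finsupp.single ⟨(y, x ⊔ y), le_sup_right⟩ 1)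

/-- The smallest monoid congruence containing the defining relations. -/
noncomputable def DimCon : AddCon (DimFree L) := addConGen (DimRel L)

/-- The dimension monoid of a lattice `L`. -/
abbrev DimMonoid := (DimCon L).Quotient

variable {L}

/-- The extended generator `Δ(x,y) := Δ(x ⊓ y, x ⊔ y)` of the dimension monoid. -/
noncomputable def dimDelta (x y : L) : DimMonoid L :=
  (DimCon L).mk' (Finsupp.single ⟨(x ⊓ y, x ⊔ y), inf_le_sup⟩ 1)

end Dim

namespace DimMonoid

variable {L : Type*} [Lattice L] {x y z : L}

/-- The basic generator `Δ(x, y)` for `x ≤ y`, as opposed to the extended `dimDelta x y`. -/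
noncomputable def delta (h : x ≤ y) : DimMonoid L :=
  (DimCon L).mk' (Finsupp.single ⟨(x, y), h⟩ 1)

theorem delta_trans (hxy : x ≤ y) (hyz : y ≤ z) :
    delta (hxy.trans hyz) = delta hxy + delta hyz := by
  rw [delta, delta, delta, ← map_add]
  exact (AddCon.eq _).mpr (AddConGen.Rel.of _ _ (DimRel.d1 x y z hxy hyz))

theorem delta_eq_delta_of_inf_eq_of_sup_eq {u v : L} (hu : x ⊓ y = u) (hv : x ⊔ y = v)
    (hux : u ≤ x) (hyv : y ≤ v) : delta hux = delta hyv := by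
  subst hu hv
  exact (AddCon.eq _).mpr (AddConGen.Rel.of _ _ (DimRel.d2 x y))

section Lift

variable {M : Type*} [AddCommMonoid M] (f : DimFree L →+ M)
  (hf : ∀ a b, DimRel L a b → f a = f b)

noncomputable def lift : DimMonoid L →+ M :=
  (DimCon L).lift f <| by rw [DimCon, AddCon.addConGen_le]; exact hf

theorem lift_delta (h : x ≤ y) : lift f hf (delta h) = f (Finsupp.single ⟨(x, y), h⟩ 1) :=
  AddCon.lift_mk' _ _

end Lift

open Classical in
/-- `WithTop Unit` is the two-element semilattice `{0, ⊤}`; `Δ(x, y)` goes to `0` iff `x = y`. -/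
noncomputable def offDiag : DimMonoid L →+ WithTop Unit :=
  lift (Finsupp.liftAddHom fun p => multiplesHom _ (if p.1.1 = p.1.2 then 0 else ⊤)) <| by
    intro a b hab
    cases hab with
    | d0 x => simp
    | d1 x y z hxy hyz =>
      simp only [map_add, Finsupp.liftAddHom_apply_single, multiplesHom_apply, one_nsmul]
      have hxz : x = z ↔ x = y ∧ y = z :=
        ⟨fun h => ⟨le_antisymm hxy (hyz.trans h.ge), le_antisymm hyz (h ▸ hxy)⟩,
          fun h => h.1.trans h.2⟩
      rw [if_congr hxz rfl rfl]
      by_cases h₁ : x = y <;> by_cases h₂ : y = z <;> simp [h₁, h₂]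
    | d2 x y =>
      simp only [Finsupp.liftAddHom_apply_single, multiplesHom_apply, one_nsmul, inf_eq_left,
        eq_comm (a := y), sup_eq_right]

open Classical in
theorem offDiag_delta (h : x ≤ y) : offDiag (delta h) = if x = y then 0 else ⊤ := by
  simp [offDiag, lift_delta]

theorem eq_of_delta_eq_zero (h : x ≤ y) (h0 : delta h = 0) : x = y := by
  by_contra hne
  simpa [h0, hne] using offDiag_delta h

theorem delta_inf_add_delta_eq_delta_inf {a b c : L} (hca : c ≤ a) (hinf : a ⊓ b = c ⊓ b)
    (hsup : a ⊔ b = c ⊔ b) :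
    delta (inf_le_left : c ⊓ b ≤ c) + delta hca = delta (inf_le_left : c ⊓ b ≤ c) :=
  calc delta (inf_le_left : c ⊓ b ≤ c) + delta hca = delta (inf_le_left.trans hca) :=
        (delta_trans _ _).symm
    _ = delta (le_sup_right : b ≤ c ⊔ b) := delta_eq_delta_of_inf_eq_of_sup_eq hinf hsup _ _
    _ = delta (inf_le_left : c ⊓ b ≤ c) := (delta_eq_delta_of_inf_eq_of_sup_eq rfl rfl _ _).symm

theorem eq_of_inf_eq_of_sup_eq {M : Type*} [AddCancelCommMonoid M] (μ : DimMonoid L →+ M)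
    (hzs : ∀ d : DimMonoid L, μ d = 0 → d = 0) {a b c : L} (hca : c ≤ a)
    (hinf : a ⊓ b = c ⊓ b) (hsup : a ⊔ b = c ⊔ b) : c = a := by
  have h := congrArg μ (delta_inf_add_delta_eq_delta_inf hca hinf hsup)
  rw [map_add, add_eq_left] at h
  exact eq_of_delta_eq_zero hca (hzs _ h)

end DimMonoid

/-- If the dimension monoid of a lattice `L` admits a zero-separating monoid
homomorphism into a cancellative commutative monoid, then `L` is modular. -/
theorem modular_of_zero_separating_hom {L : Type*} [Lattice L]
    {M : Type*} [AddCancelCommMonoid M] (μ : DimMonoid L →+ M)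
    (hzs : ∀ d : DimMonoid L, μ d = 0 → d = 0) :
    IsModularLattice L := by
  refine ⟨fun {x} y {z} hxz => ?_⟩
  have hca : x ⊔ y ⊓ z ≤ (x ⊔ y) ⊓ z :=
    sup_le (le_inf le_sup_left hxz) (inf_le_inf_right z le_sup_right)
  have hinf : (x ⊔ y) ⊓ z ⊓ y = (x ⊔ y ⊓ z) ⊓ y := by
    refine le_antisymm (le_inf ?_ inf_le_right) (inf_le_inf_right y hca)
    calc (x ⊔ y) ⊓ z ⊓ y ≤ y ⊓ z := le_inf inf_le_right (inf_le_left.trans inf_le_right)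
      _ ≤ x ⊔ y ⊓ z := le_sup_right
  have hsup : (x ⊔ y) ⊓ z ⊔ y = (x ⊔ y ⊓ z) ⊔ y :=
    le_antisymm (sup_le (inf_le_left.trans (sup_le_sup_right le_sup_left y)) le_sup_right)
      (sup_le_sup_right hca y)
  exact (DimMonoid.eq_of_inf_eq_of_sup_eq μ hzs hca hinf hsup).ge
end

section
/- Let X be a set and let (H, e, ⋈) with j : F_X → H be a universal D-envelope of (F_X, ē). With a_ξ = j(ā_ξ), b_ξ = e − a_ξ, c_{ξ,η} = ⋈(0, a_ξ + a_η − e, a_ξ, a_η) for distinct ξ, η, and subgroups G_∅ = ℤe, G_{ξ} = ⟨a_ξ, b_ξ⟩, G_{ξ,η} = ⟨a_ξ, a_η, b_ξ, b_η, c_{ξ,η}⟩ of H, there exists an interpolator ι on H that is smoothening of level 2: every subgroup G_Z, for Z ⊆ X with at most two elements, is closed under ι (i.e. ι(x,x',y,y') ∈ G_Z whenever x, x', y, y' ∈ G_Z). -/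
/-!
Every `Y ⊆ X` gives a normalized state of `F_X`, evaluation at `Y`. Since `ℤ` with
`(x, x', y, y') ↦ max x x'` is a D-structure, universality extends it to a state `E_Y` of `H`
turning `⋈` into the maximum of its first two arguments; in particular
`E_Y(c_{ξ,η}) = [ξ ∈ Y ∧ η ∈ Y]`. For `|Z| ≤ 2` the group `G_Z` is then free on positive atoms
indexed by `S ⊆ Z` (for a pair: `c`, `a_ξ - c`, `a_η - c`, `c - (a_ξ + a_η - e)`), and `E_Y`
reads off the coordinate at `Y ∩ Z`. So `G_Z ≅ ℤ^(𝒫 Z)` is a lattice whose join is computed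
by the states. An element of `G_Z` whose states only depend on `Y ∩ Z'` lies in `G_{Z ∩ Z'}`,
so this join does not depend on the small `Z` it is computed in. The interpolator takes the
join when its four arguments lie in a common small `G_Z`, and `⋈` otherwise.
-/

/-- An interpolator on a partially ordered abelian group. -/
def IsInterpolator {H : Type*} [AddCommGroup H] [PartialOrder H] [IsOrderedAddMonoid H] (ι : H → H → H → H → H) : Prop :=
  (∀ x x' y y', ι x x' y y' = ι x' x y y') ∧
  (∀ x x' y y', ι x x' y y' = ι x x' y' y) ∧
  (∀ x x' y y', x ≤ y → x ≤ y' → x' ≤ y → x' ≤ y' →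
    (x ≤ ι x x' y y' ∧ x' ≤ ι x x' y y' ∧ ι x x' y y' ≤ y ∧ ι x x' y y' ≤ y'))

/-- A D-structure: an unperforated partially ordered abelian group with a distinguished
positive element `e` such that `0 ≤ x` and `3x ≤ e` imply `x = 0`, and an interpolator. -/
def IsDStructure {H : Type*} [AddCommGroup H] [PartialOrder H] [IsOrderedAddMonoid H] (e : H) (ι : H → H → H → H → H) : Prop :=
  (∀ (m : ℕ) (x : H), 0 < m → 0 ≤ m • x → 0 ≤ x) ∧ 0 ≤ e ∧
  (∀ x : H, 0 ≤ x → 3 • x ≤ e → x = 0) ∧ IsInterpolator ι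

/-- A D-morphism between D-structures. -/
def IsDMorphism {H K : Type*} [AddCommGroup H] [PartialOrder H] [IsOrderedAddMonoid H] [AddCommGroup K] [PartialOrder K] [IsOrderedAddMonoid K]
    (eH : H) (ιH : H → H → H → H → H) (eK : K) (ιK : K → K → K → K → K)
    (h : H →+ K) : Prop :=
  Monotone h ∧ h eH = eK ∧
  ∀ x x' y y', h (ιH x x' y y') = ιK (h x) (h x') (h y) (h y')

/-- A universal D-envelope of a pointed partially ordered abelian group `(G, eG)`. -/
def IsUniversalDEnvelope {G H : Type*} [AddCommGroup G] [PartialOrder G] [IsOrderedAddMonoid G] [AddCommGroup H] [PartialOrder H] [IsOrderedAddMonoid H]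
    (eG : G) (eH : H) (bow : H → H → H → H → H) (j : G →+ H) : Prop :=
  IsDStructure eH bow ∧ Monotone j ∧ j eG = eH ∧
  ∀ (K : Type*) [AddCommGroup K] [PartialOrder K] [IsOrderedAddMonoid K], ∀ (eK : K) (ι : K → K → K → K → K),
    IsDStructure eK ι → ∀ (f : G →+ K), Monotone f → f eG = eK →
    ∃! h : H →+ K, IsDMorphism eH bow eK ι h ∧ ∀ g, h (j g) = f g

/-- The constant function `1` on the powerset of `X`. -/
def eBar (X : Type*) : Set X → ℤ := fun _ => 1

/-- The characteristic function of `{Y ⊆ X : ξ ∈ Y}`. -/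
noncomputable def aBar {X : Type*} (ξ : X) : Set X → ℤ :=
  Set.indicator {Y : Set X | ξ ∈ Y} fun _ => 1

/-- The subgroup of `Set X → ℤ` generated by `ē` and the `ā_ξ`, ordered componentwise. -/
noncomputable def FX (X : Type*) : AddSubgroup (Set X → ℤ) :=
  AddSubgroup.closure ({eBar X} ∪ Set.range (aBar (X := X)))

/-- `ē` as an element of `F_X`. -/
noncomputable def eElem (X : Type*) : FX X :=
  ⟨eBar X, AddSubgroup.subset_closure (Set.mem_union_left _ rfl)⟩

/-- `ā_ξ` as an element of `F_X`. -/
noncomputable def aElem {X : Type*} (ξ : X) : FX X :=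
  ⟨aBar ξ, AddSubgroup.subset_closure (Set.mem_union_right _ ⟨ξ, rfl⟩)⟩

/-- The subgroup `G_Z` of `H` associated with a subset `Z` of `X` with at most two
elements: it is generated by `e`, the `a_ξ` and `b_ξ = e - a_ξ` for `ξ ∈ Z`, and
the `c_{ξ,η}` for distinct `ξ, η ∈ Z`. -/
def Gsub {X H : Type*} [AddCommGroup H] [PartialOrder H] [IsOrderedAddMonoid H] (e : H) (a : X → H)
    (c : X → X → H) (Z : Set X) : AddSubgroup H :=
  AddSubgroup.closure
    ({e} ∪ (a '' Z) ∪ ((fun ξ => e - a ξ) '' Z) ∪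
      {w | ∃ ξ ∈ Z, ∃ η ∈ Z, ξ ≠ η ∧ w = c ξ η})

/-- The map `φ_ξ : ℤ² → H`, `(x₀, x₁) ↦ x₀ a_ξ + x₁ b_ξ`. -/
def phiMap {H : Type*} [AddCommGroup H] [PartialOrder H] [IsOrderedAddMonoid H] (e aξ : H) : ℤ × ℤ → H :=
  fun p => p.1 • aξ + p.2 • (e - aξ)

/-- The map `ψ_{ξ,η} : ℤ⁴ → H`,
`(x₀,x₁,x₂,x₃) ↦ x₀ c + x₁(a_ξ − c) + x₂(a_η − c) + x₃(c + e − a_ξ − a_η)`. -/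
def psiMap {H : Type*} [AddCommGroup H] [PartialOrder H] [IsOrderedAddMonoid H] (e aξ aη c : H) : (Fin 4 → ℤ) → H :=
  fun v => v 0 • c + v 1 • (aξ - c) + v 2 • (aη - c) + v 3 • (c + e - aξ - aη)

universe w

instance {α : Type*} [AddCommMonoid α] [PartialOrder α] [IsOrderedAddMonoid α] :
    IsOrderedAddMonoid (ULift.{w} α) where
  add_le_add_left _ _ h c := add_le_add_left (α := α) h c.down

theorem isInterpolator_max {K : Type*} [AddCommGroup K] [LinearOrder K] [IsOrderedAddMonoid K] :
    IsInterpolator (fun x x' (_ _ : K) => max x x') :=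
  ⟨fun _ _ _ _ => max_comm _ _, fun _ _ _ _ => rfl, fun _ _ _ _ hxy hxy' hx'y hx'y' =>
    ⟨le_max_left _ _, le_max_right _ _, max_le hxy hx'y, max_le hxy' hx'y'⟩⟩

theorem isDStructure_ulift_int :
    IsDStructure (ULift.up.{w} (1 : ℤ)) (fun x x' _ _ => max x x') := by
  refine ⟨fun m x hm hx => ?_, zero_le_one (α := ℤ), fun x hx h3 => ?_, isInterpolator_max⟩
  · have hx' : (0 : ℤ) ≤ m * x.down := (nsmul_eq_mul m x.down).symm.trans_ge hx
    have hm' : (0 : ℤ) < m := by exact_mod_cast hm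
    exact ULift.down_le.1 ((mul_nonneg_iff_of_pos_left hm').1 hx')
  · change (0 : ℤ) ≤ x.down at hx
    have h3' : (3 : ℤ) * x.down ≤ 1 := (nsmul_eq_mul 3 x.down).symm.trans_le h3
    exact ULift.ext _ _ (show x.down = 0 by omega)

theorem IsUniversalDEnvelope.exists_extension_int {G H : Type*} [AddCommGroup G] [PartialOrder G]
    [IsOrderedAddMonoid G] [AddCommGroup H] [PartialOrder H] [IsOrderedAddMonoid H]
    {eG : G} {eH : H} {bow : H → H → H → H → H} {j : G →+ H}
    (henv : IsUniversalDEnvelope.{_, _, w} eG eH bow j) (f : G →+ ℤ) (hf : Monotone f)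
    (hfe : f eG = 1) :
    ∃ E : H →+ ℤ, Monotone E ∧ (∀ g, E (j g) = f g) ∧
      ∀ x x' y y', E (bow x x' y y') = max (E x) (E x') := by
  let up : ℤ →+ ULift.{w} ℤ := AddEquiv.ulift.symm.toAddMonoidHom
  let down : ULift.{w} ℤ →+ ℤ := AddEquiv.ulift.toAddMonoidHom
  obtain ⟨h, ⟨⟨hmono, -, hbow⟩, hj⟩, -⟩ :=
    henv.2.2.2 _ _ _ isDStructure_ulift_int (up.comp f) (fun _ _ hg => ULift.down_le.1 (hf hg))
      (congrArg ULift.up hfe)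
  exact ⟨down.comp h, fun _ _ hxy => ULift.down_le.2 (hmono hxy),
    fun g => congrArg ULift.down (hj g), fun x x' y y' => congrArg ULift.down (hbow x x' y y')⟩

section FX

variable {X : Type*}

noncomputable def evalFX (Y : Set X) : FX X →+ ℤ :=
  (Pi.evalAddMonoidHom (fun _ : Set X => ℤ) Y).comp (FX X).subtype

theorem monotone_evalFX (Y : Set X) : Monotone (evalFX Y) :=
  fun _ _ hg => (Subtype.coe_le_coe.2 hg : _) Y

theorem evalFX_eElem (Y : Set X) : evalFX Y (eElem X) = 1 := rfl

open Classical in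
theorem evalFX_aElem (Y : Set X) (ξ : X) : evalFX Y (aElem ξ) = if ξ ∈ Y then 1 else 0 :=
  Set.indicator_apply {Y : Set X | ξ ∈ Y} (fun _ => (1 : ℤ)) Y

theorem aElem_nonneg (ξ : X) : 0 ≤ aElem ξ := fun Y => by
  classical
  exact (evalFX_aElem Y ξ).trans_ge (by split_ifs <;> norm_num)

theorem aElem_le_eElem (ξ : X) : aElem ξ ≤ eElem X := fun Y => by
  classical
  exact (evalFX_aElem Y ξ).trans_le (by split_ifs <;> norm_num [eElem, eBar])

end FX

section AtomBasis

variable {X H : Type*} [AddCommGroup H] [PartialOrder H]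

/-- Makes `G ≅ ℤ^(𝒫 Z)` as ordered groups, `E Y` being the coordinate at `Y ∩ Z`. -/
structure IsAtomBasis (E : Set X → H →+ ℤ) (Z : Set X) (G : AddSubgroup H) (m : Set X → H) :
    Prop where
  mem : ∀ S ⊆ Z, m S ∈ G
  le_closure : G ≤ AddSubgroup.closure (m '' 𝒫 Z)
  nonneg : ∀ S ⊆ Z, 0 ≤ m S
  eval : ∀ S ⊆ Z, ∀ Y, E Y (m S) = if Y ∩ Z = S then 1 else 0

namespace IsAtomBasis

variable {E : Set X → H →+ ℤ} {Z : Set X} {G : AddSubgroup H} {m : Set X → H}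

theorem eval_inter (hm : IsAtomBasis E Z G m) {w : H} (hw : w ∈ G) (Y : Set X) :
    E (Y ∩ Z) w = E Y w := by
  have hw' := hm.le_closure hw
  clear hw
  induction hw' using AddSubgroup.closure_induction with
  | mem _ h =>
    obtain ⟨S, hS, rfl⟩ := h
    rw [hm.eval S hS, hm.eval S hS, Set.inter_assoc, Set.inter_self]
  | zero => simp only [map_zero]
  | add _ _ _ _ h h' => rw [map_add, map_add, h, h']
  | neg _ _ h => rw [map_neg, map_neg, h]

theorem eq_sum (hm : IsAtomBasis E Z G m) (hZ : Z.Finite) {w : H} (hw : w ∈ G) :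
    w = ∑ S ∈ hZ.powerset.toFinset, E S w • m S := by
  classical
  have hw' := hm.le_closure hw
  clear hw
  induction hw' using AddSubgroup.closure_induction with
  | mem _ h =>
    obtain ⟨S, hS, rfl⟩ := h
    have hcoeff : ∀ T ∈ hZ.powerset.toFinset, E T (m S) • m T = if T = S then m T else 0 := by
      intro T hT
      rw [Set.Finite.mem_toFinset] at hT
      rw [hm.eval S hS, Set.inter_eq_left.2 hT, ite_smul, one_smul, zero_smul]
    rw [Finset.sum_congr rfl hcoeff, Finset.sum_ite_eq', if_pos (by simpa using hS)]
  | zero => simp only [map_zero, zero_smul, Finset.sum_const_zero]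
  | add _ _ _ _ h h' =>
    simp only [map_add, add_smul, Finset.sum_add_distrib]
    rw [← h, ← h']
  | neg _ _ h =>
    simp only [map_neg, neg_smul, Finset.sum_neg_distrib]
    rw [← h]

theorem nonneg_of_eval_nonneg [IsOrderedAddMonoid H] (hm : IsAtomBasis E Z G m)
    (hZ : Z.Finite) {w : H} (hw : w ∈ G) (h : ∀ Y, 0 ≤ E Y w) : 0 ≤ w := by
  rw [hm.eq_sum hZ hw]
  exact Finset.sum_nonneg fun S hS =>
    zsmul_nonneg (hm.nonneg S (by simpa using hS)) (h S)

theorem le_of_eval_le [IsOrderedAddMonoid H] (hm : IsAtomBasis E Z G m) (hZ : Z.Finite)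
    {u v : H} (hu : u ∈ G) (hv : v ∈ G) (h : ∀ Y, E Y u ≤ E Y v) : u ≤ v :=
  sub_nonneg.1 <| hm.nonneg_of_eval_nonneg hZ (sub_mem hv hu) fun Y => by
    rw [map_sub, sub_nonneg]
    exact h Y

theorem exists_eval_eq (hm : IsAtomBasis E Z G m) (hZ : Z.Finite) (f : Set X → ℤ)
    (hf : ∀ Y, f (Y ∩ Z) = f Y) : ∃ w ∈ G, ∀ Y, E Y w = f Y := by
  classical
  refine ⟨∑ S ∈ hZ.powerset.toFinset, f S • m S,
    sum_mem fun S hS => zsmul_mem (hm.mem S (by simpa using hS)) _, fun Y => ?_⟩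
  have hcoeff : ∀ S ∈ hZ.powerset.toFinset,
      E Y (f S • m S) = if Y ∩ Z = S then f S else 0 := by
    intro S hS
    rw [Set.Finite.mem_toFinset] at hS
    rw [map_zsmul, hm.eval S hS, smul_ite, smul_eq_mul, mul_one, smul_zero]
  rw [map_sum, Finset.sum_congr rfl hcoeff, Finset.sum_ite_eq,
    if_pos (by simp), hf]

end IsAtomBasis

end AtomBasis

section LocallyAtomic

variable {X H : Type*} [AddCommGroup H]
  {E : Set X → H →+ ℤ} {G : Set X → AddSubgroup H} {n : ℕ}

variable (E G n) in
def IsLocalJoin (x x' w : H) : Prop :=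
  (∃ Z : Set X, Z.Finite ∧ Z.ncard ≤ n ∧ x ∈ G Z ∧ x' ∈ G Z ∧ w ∈ G Z) ∧
    ∀ Y, E Y w = max (E Y x) (E Y x')

theorem isLocalJoin_comm (x x' : H) : IsLocalJoin E G n x x' = IsLocalJoin E G n x' x := by
  ext w
  simp only [IsLocalJoin, max_comm (E _ x), and_left_comm (a := x ∈ G _)]

variable (E G n) in
/-- Junk unless `x` and `x'` lie in a common small `G Z`. -/
noncomputable def localJoin (x x' : H) : H :=
  Classical.epsilon (IsLocalJoin E G n x x')

theorem localJoin_comm (x x' : H) : localJoin E G n x x' = localJoin E G n x' x :=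
  congrArg Classical.epsilon (isLocalJoin_comm x x')

variable (E G n) in
open Classical in
noncomputable def smoothInterpolator (bow : H → H → H → H → H) (x x' y y' : H) : H :=
  if ∃ Z : Set X, Z.Finite ∧ Z.ncard ≤ n ∧ {x, x', y, y'} ⊆ (G Z : Set H)
  then localJoin E G n x x' else bow x x' y y'

variable [PartialOrder H]

variable (E G n) in
structure IsLocallyAtomic : Prop where
  monotone_eval : ∀ Y, Monotone (E Y)
  monotone : Monotone G
  exists_atomBasis : ∀ Z : Set X, Z.Finite → Z.ncard ≤ n → ∃ m, IsAtomBasis E Z (G Z) m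

theorem IsLocallyAtomic.exists_isLocalJoin (hA : IsLocallyAtomic E G n) {Z : Set X}
    (hZ : Z.Finite) (hZn : Z.ncard ≤ n) {x x' : H} (hx : x ∈ G Z) (hx' : x' ∈ G Z) :
    ∃ w, IsLocalJoin E G n x x' w := by
  obtain ⟨m, hm⟩ := hA.exists_atomBasis Z hZ hZn
  obtain ⟨w, hw, hEw⟩ := hm.exists_eval_eq hZ (fun Y => max (E Y x) (E Y x'))
    fun Y => by rw [hm.eval_inter hx, hm.eval_inter hx']
  exact ⟨w, ⟨Z, hZ, hZn, hx, hx', hw⟩, hEw⟩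

theorem IsLocallyAtomic.isLocalJoin_localJoin (hA : IsLocallyAtomic E G n) {Z : Set X}
    (hZ : Z.Finite) (hZn : Z.ncard ≤ n) {x x' : H} (hx : x ∈ G Z) (hx' : x' ∈ G Z) :
    IsLocalJoin E G n x x' (localJoin E G n x x') :=
  Classical.epsilon_spec (hA.exists_isLocalJoin hZ hZn hx hx')

variable [IsOrderedAddMonoid H]

theorem IsLocallyAtomic.mem_of_eval_inter (hA : IsLocallyAtomic E G n) {Z : Set X}
    (hZ : Z.Finite) (hZn : Z.ncard ≤ n) {w : H} (hw : w ∈ G Z) (Z' : Set X)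
    (h : ∀ Y, E (Y ∩ Z') w = E Y w) : w ∈ G Z' := by
  obtain ⟨m, hm⟩ := hA.exists_atomBasis Z hZ hZn
  obtain ⟨m', hm'⟩ := hA.exists_atomBasis (Z ∩ Z') (hZ.inter_of_left Z')
    ((Set.ncard_inter_le_ncard_left Z Z' hZ).trans hZn)
  obtain ⟨w', hw', hEw'⟩ := hm'.exists_eval_eq (hZ.inter_of_left Z') (fun Y => E Y w)
    fun Y => by rw [← Set.inter_assoc, h, hm.eval_inter hw]
  have hw'Z : w' ∈ G Z := hA.monotone Set.inter_subset_left hw'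
  have hww' : w = w' := le_antisymm (hm.le_of_eval_le hZ hw hw'Z fun Y => (hEw' Y).ge)
    (hm.le_of_eval_le hZ hw'Z hw fun Y => (hEw' Y).le)
  exact hA.monotone Set.inter_subset_right (hww' ▸ hw')

theorem IsLocallyAtomic.mem_of_isLocalJoin (hA : IsLocallyAtomic E G n) {x x' w : H}
    (hj : IsLocalJoin E G n x x' w) {Z : Set X} (hZ : Z.Finite) (hZn : Z.ncard ≤ n)
    (hx : x ∈ G Z) (hx' : x' ∈ G Z) : w ∈ G Z := by
  obtain ⟨⟨Z₀, hZ₀, hZ₀n, -, -, hw₀⟩, hEw⟩ := hj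
  obtain ⟨m, hm⟩ := hA.exists_atomBasis Z hZ hZn
  exact hA.mem_of_eval_inter hZ₀ hZ₀n hw₀ Z fun Y => by
    rw [hEw, hEw, hm.eval_inter hx, hm.eval_inter hx']

theorem IsLocallyAtomic.isInterpolator_smoothInterpolator (hA : IsLocallyAtomic E G n)
    {bow : H → H → H → H → H} (hbow : IsInterpolator bow) :
    IsInterpolator (smoothInterpolator E G n bow) := by
  classical
  refine ⟨fun x x' y y' => ?_, fun x x' y y' => ?_, fun x x' y y' hxy hxy' hx'y hx'y' => ?_⟩
  · simp only [smoothInterpolator, Set.insert_comm x x', localJoin_comm x x', hbow.1 x x']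
  · simp only [smoothInterpolator, Set.pair_comm y y', hbow.2.1 x x' y y']
  · unfold smoothInterpolator
    split_ifs with hZ
    · obtain ⟨Z, hZ, hZn, hsub⟩ := hZ
      simp only [Set.insert_subset_iff, Set.singleton_subset_iff, SetLike.mem_coe] at hsub
      obtain ⟨hx, hx', hy, hy'⟩ := hsub
      obtain ⟨m, hm⟩ := hA.exists_atomBasis Z hZ hZn
      have hj := hA.isLocalJoin_localJoin hZ hZn hx hx'
      have hw := hA.mem_of_isLocalJoin hj hZ hZn hx hx'
      have hle : ∀ {z}, z ∈ G Z → x ≤ z → x' ≤ z → localJoin E G n x x' ≤ z :=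
        fun hz hxz hx'z => hm.le_of_eval_le hZ hw hz fun Y => by
          rw [hj.2]
          exact max_le (hA.monotone_eval Y hxz) (hA.monotone_eval Y hx'z)
      exact ⟨hm.le_of_eval_le hZ hx hw fun Y => hj.2 Y ▸ le_max_left _ _,
        hm.le_of_eval_le hZ hx' hw fun Y => hj.2 Y ▸ le_max_right _ _,
        hle hy hxy hx'y, hle hy' hxy' hx'y'⟩
    · exact hbow.2.2 x x' y y' hxy hxy' hx'y hx'y'

theorem IsLocallyAtomic.smoothInterpolator_mem (hA : IsLocallyAtomic E G n)
    (bow : H → H → H → H → H) {Z : Set X} (hZ : Z.Finite) (hZn : Z.ncard ≤ n)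
    {x x' y y' : H} (hx : x ∈ G Z) (hx' : x' ∈ G Z) (hy : y ∈ G Z) (hy' : y' ∈ G Z) :
    smoothInterpolator E G n bow x x' y y' ∈ G Z := by
  classical
  have hsub : {x, x', y, y'} ⊆ (G Z : Set H) := by
    simp only [Set.insert_subset_iff, Set.singleton_subset_iff, SetLike.mem_coe]
    exact ⟨hx, hx', hy, hy'⟩
  rw [smoothInterpolator, if_pos ⟨Z, hZ, hZn, hsub⟩]
  exact hA.mem_of_isLocalJoin (hA.isLocalJoin_localJoin hZ hZn hx hx') hZ hZn hx hx'

end LocallyAtomic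

theorem Set.inter_eq_iff_forall_mem_iff {α : Type*} {Y Z S : Set α} (hS : S ⊆ Z) :
    Y ∩ Z = S ↔ ∀ ζ ∈ Z, (ζ ∈ Y ↔ ζ ∈ S) := by
  refine ⟨fun h ζ hζ => by rw [← h]; simp [hζ], fun h => Set.ext fun ζ => ?_⟩
  by_cases hζ : ζ ∈ Z
  · simp [hζ, h ζ hζ]
  · simp only [Set.mem_inter_iff, hζ, and_false, false_iff]
    exact fun h' => hζ (hS h')

section Gsub

variable {X H : Type*} [AddCommGroup H] [PartialOrder H] [IsOrderedAddMonoid H]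
  {e : H} {a : X → H} {c : X → X → H}

theorem Gsub_mono : Monotone (Gsub e a c) := fun _ _ h =>
  AddSubgroup.closure_mono <| Set.union_subset_union
    (Set.union_subset_union (Set.union_subset_union le_rfl (Set.image_mono h)) (Set.image_mono h))
    fun _ ⟨ξ, hξ, η, hη, hne, hw⟩ => ⟨ξ, h hξ, η, h hη, hne, hw⟩

theorem e_mem_Gsub (Z : Set X) : e ∈ Gsub e a c Z :=
  AddSubgroup.subset_closure (Or.inl (Or.inl (Or.inl rfl)))

theorem a_mem_Gsub {Z : Set X} {ξ : X} (hξ : ξ ∈ Z) : a ξ ∈ Gsub e a c Z :=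
  AddSubgroup.subset_closure (Or.inl (Or.inl (Or.inr ⟨ξ, hξ, rfl⟩)))

theorem c_mem_Gsub {Z : Set X} {ξ η : X} (hξ : ξ ∈ Z) (hη : η ∈ Z) (hne : ξ ≠ η) :
    c ξ η ∈ Gsub e a c Z :=
  AddSubgroup.subset_closure (Or.inr ⟨ξ, hξ, η, hη, hne, rfl⟩)

theorem Gsub_le {Z : Set X} {K : AddSubgroup H} (he : e ∈ K) (ha : ∀ ξ ∈ Z, a ξ ∈ K)
    (hc : ∀ ξ ∈ Z, ∀ η ∈ Z, ξ ≠ η → c ξ η ∈ K) : Gsub e a c Z ≤ K := by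
  refine AddSubgroup.closure_le K |>.2 ?_
  rintro _ (((rfl | ⟨ξ, hξ, rfl⟩) | ⟨ξ, hξ, rfl⟩) | ⟨ξ, hξ, η, hη, hne, rfl⟩)
  exacts [he, ha ξ hξ, sub_mem he (ha ξ hξ), hc ξ hξ η hη hne]

open Classical in
structure IsCoordinateFamily (E : Set X → H →+ ℤ) (e : H) (a : X → H) (c : X → X → H) :
    Prop where
  monotone_eval : ∀ Y, Monotone (E Y)
  eval_e : ∀ Y, E Y e = 1
  eval_a : ∀ Y ξ, E Y (a ξ) = if ξ ∈ Y then 1 else 0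
  eval_c : ∀ Y ξ η, E Y (c ξ η) = if ξ ∈ Y ∧ η ∈ Y then 1 else 0
  e_nonneg : 0 ≤ e
  a_nonneg : ∀ ξ, 0 ≤ a ξ
  a_le : ∀ ξ, a ξ ≤ e
  c_comm : ∀ ξ η, c η ξ = c ξ η
  c_nonneg : ∀ ξ η, 0 ≤ c ξ η
  le_c : ∀ ξ η, a ξ + a η - e ≤ c ξ η
  c_le : ∀ ξ η, c ξ η ≤ a ξ

namespace IsCoordinateFamily

variable {E : Set X → H →+ ℤ}

theorem isAtomBasis_empty (hC : IsCoordinateFamily E e a c) :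
    IsAtomBasis E ∅ (Gsub e a c ∅) fun _ => e := by
  refine ⟨fun _ _ => e_mem_Gsub _, Gsub_le ?_ (by simp) (by simp), fun _ _ => hC.e_nonneg,
    fun S hS Y => ?_⟩
  · exact AddSubgroup.subset_closure ⟨∅, Set.empty_subset _, rfl⟩
  · rw [Set.subset_empty_iff.1 hS, Set.inter_empty, if_pos rfl, hC.eval_e]

open Classical in
theorem isAtomBasis_singleton (hC : IsCoordinateFamily E e a c) (ξ : X) :
    IsAtomBasis E {ξ} (Gsub e a c {ξ}) fun S => if ξ ∈ S then a ξ else e - a ξ := by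
  have hm : ∀ S : Set X, S ⊆ {ξ} → (if ξ ∈ S then a ξ else e - a ξ) ∈
      AddSubgroup.closure ((fun S => if ξ ∈ S then a ξ else e - a ξ) '' 𝒫 {ξ}) :=
    fun S hS => AddSubgroup.subset_closure ⟨S, hS, rfl⟩
  have hmξ := hm {ξ} subset_rfl
  have hm0 := hm ∅ (Set.empty_subset _)
  simp only [Set.mem_singleton, if_true, Set.mem_empty_iff_false, if_false] at hmξ hm0
  refine ⟨fun S _ => ?_, Gsub_le ?_ ?_ ?_, fun S _ => ?_, fun S hS Y => ?_⟩
  · split_ifs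
    exacts [a_mem_Gsub rfl, sub_mem (e_mem_Gsub _) (a_mem_Gsub rfl)]
  · simpa using add_mem hmξ hm0
  · simpa using hmξ
  · simp
  · split_ifs
    exacts [hC.a_nonneg ξ, sub_nonneg.2 (hC.a_le ξ)]
  · simp only [Set.inter_eq_iff_forall_mem_iff hS]
    by_cases hξY : ξ ∈ Y <;> by_cases hξS : ξ ∈ S <;>
      simp [hξY, hξS, hC.eval_a, hC.eval_e]

open Classical in
theorem isAtomBasis_pair (hC : IsCoordinateFamily E e a c) {ξ η : X} (hne : ξ ≠ η) :
    IsAtomBasis E {ξ, η} (Gsub e a c {ξ, η}) fun S =>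
      if ξ ∈ S then (if η ∈ S then c ξ η else a ξ - c ξ η)
      else (if η ∈ S then a η - c ξ η else c ξ η - (a ξ + a η - e)) := by
  set m : Set X → H := fun S => if ξ ∈ S then (if η ∈ S then c ξ η else a ξ - c ξ η)
      else (if η ∈ S then a η - c ξ η else c ξ η - (a ξ + a η - e))
  have hξ : ξ ∈ ({ξ, η} : Set X) := Set.mem_insert ξ _
  have hη : η ∈ ({ξ, η} : Set X) := Set.mem_insert_of_mem ξ rfl
  have hm : ∀ S ⊆ {ξ, η}, m S ∈ AddSubgroup.closure (m '' 𝒫 {ξ, η}) :=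
    fun S hS => AddSubgroup.subset_closure ⟨S, hS, rfl⟩
  have hm11 := hm {ξ, η} subset_rfl
  have hm10 := hm {ξ} (Set.singleton_subset_iff.2 hξ)
  have hm01 := hm {η} (Set.singleton_subset_iff.2 hη)
  have hm00 := hm ∅ (Set.empty_subset _)
  simp only [m, Set.mem_insert_iff, Set.mem_singleton_iff, hne, hne.symm, Set.mem_empty_iff_false,
    or_true, or_false, if_true, if_false] at hm11 hm10 hm01 hm00
  refine ⟨fun S _ => ?_, Gsub_le ?_ ?_ ?_, fun S _ => ?_, fun S hS Y => ?_⟩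
  · have hc : c ξ η ∈ Gsub e a c {ξ, η} := c_mem_Gsub hξ hη hne
    have haξ : a ξ ∈ Gsub e a c {ξ, η} := a_mem_Gsub hξ
    have haη : a η ∈ Gsub e a c {ξ, η} := a_mem_Gsub hη
    simp only [m]
    split_ifs
    exacts [hc, sub_mem haξ hc, sub_mem haη hc,
      sub_mem hc (sub_mem (add_mem haξ haη) (e_mem_Gsub _))]
  · convert add_mem (add_mem (add_mem hm11 hm10) hm01) hm00 using 1
    abel
  · rintro ζ (rfl | rfl)
    · simpa using add_mem hm11 hm10
    · simpa using add_mem hm11 hm01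
  · rintro ζ (rfl | rfl) θ (rfl | rfl) hζθ
    exacts [absurd rfl hζθ, hm11, hC.c_comm θ ζ ▸ hm11, absurd rfl hζθ]
  · simp only [m]
    split_ifs
    exacts [hC.c_nonneg ξ η, sub_nonneg.2 (hC.c_le ξ η),
      sub_nonneg.2 (hC.c_comm ξ η ▸ hC.c_le η ξ), sub_nonneg.2 (hC.le_c ξ η)]
  · simp only [Set.inter_eq_iff_forall_mem_iff hS]
    by_cases hξY : ξ ∈ Y <;> by_cases hηY : η ∈ Y <;> by_cases hξS : ξ ∈ S <;>
      by_cases hηS : η ∈ S <;> simp [m, hξY, hηY, hξS, hηS, hC.eval_a, hC.eval_c, hC.eval_e]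

theorem isLocallyAtomic (hC : IsCoordinateFamily E e a c) :
    IsLocallyAtomic E (Gsub e a c) 2 := by
  refine ⟨hC.monotone_eval, Gsub_mono, fun Z hZ hZ2 => ?_⟩
  obtain h | h | h : Z.ncard = 0 ∨ Z.ncard = 1 ∨ Z.ncard = 2 := by omega
  · exact ⟨_, (Set.ncard_eq_zero hZ).1 h ▸ hC.isAtomBasis_empty⟩
  · obtain ⟨ξ, rfl⟩ := Set.ncard_eq_one.1 h
    exact ⟨_, hC.isAtomBasis_singleton ξ⟩
  · obtain ⟨ξ, η, hne, rfl⟩ := Set.ncard_eq_two.1 h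
    exact ⟨_, hC.isAtomBasis_pair hne⟩

end IsCoordinateFamily

end Gsub

theorem isCoordinateFamily_of_isUniversalDEnvelope {X : Type*} {H : Type*} [AddCommGroup H]
    [PartialOrder H] [IsOrderedAddMonoid H] {e : H} {bow : H → H → H → H → H}
    {j : FX X →+ H}
    (henv : IsUniversalDEnvelope.{_, _, w} (eElem X) e bow j) {a : X → H}
    (hadef : ∀ ξ, a ξ = j (aElem ξ)) {c : X → X → H}
    (hcdef : ∀ ξ η, c ξ η = bow 0 (a ξ + a η - e) (a ξ) (a η)) :
    ∃ E : Set X → H →+ ℤ, IsCoordinateFamily E e a c := by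
  classical
  choose E hEmono hEj hEbow using fun Y =>
    henv.exists_extension_int (evalFX Y) (monotone_evalFX Y) (evalFX_eElem Y)
  obtain ⟨⟨-, he0, -, hbow⟩, hjmono, hje, -⟩ := henv
  have hEe : ∀ Y, E Y e = 1 := fun Y => by rw [← hje, hEj, evalFX_eElem]
  have hEa : ∀ Y ξ, E Y (a ξ) = if ξ ∈ Y then 1 else 0 := fun Y ξ => by
    rw [hadef, hEj, evalFX_aElem]
  have ha0 : ∀ ξ, 0 ≤ a ξ := fun ξ => by simpa [hadef] using hjmono (aElem_nonneg ξ)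
  have hae : ∀ ξ, a ξ ≤ e := fun ξ => by
    rw [hadef, ← hje]
    exact hjmono (aElem_le_eElem ξ)
  have hc : ∀ ξ η,
      0 ≤ c ξ η ∧ a ξ + a η - e ≤ c ξ η ∧ c ξ η ≤ a ξ ∧ c ξ η ≤ a η := by
    intro ξ η
    rw [hcdef]
    exact hbow.2.2 _ _ _ _ (ha0 ξ) (ha0 η)
      (sub_le_iff_le_add.2 (add_le_add_right (hae η) (a ξ)))
      (sub_le_iff_le_add.2 ((add_le_add_left (hae ξ) (a η)).trans_eq (add_comm e _)))
  refine ⟨E, hEmono, hEe, hEa, fun Y ξ η => ?_, he0, ha0, hae, fun ξ η => ?_,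
    fun ξ η => (hc ξ η).1, fun ξ η => (hc ξ η).2.1, fun ξ η => (hc ξ η).2.2.1⟩
  · rw [hcdef, hEbow, map_zero, map_sub, map_add, hEa, hEa, hEe]
    split_ifs <;> simp_all
  · rw [hcdef, hcdef, add_comm (a η)]
    exact hbow.2.1 _ _ _ _

universe u v

/-- **Lemma 4.2.** On the universal D-envelope `(H, e, ⋈)` of `(F_X, ē)` there exists a
smoothening interpolator of level `2`: an interpolator `ι` such that every subgroup
`G_Z`, for `Z ⊆ X` with at most two elements, is closed under `ι`. -/
theorem exists_smoothening_interpolator {X : Type u} {H : Type v} [AddCommGroup H] [PartialOrder H] [IsOrderedAddMonoid H]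
    (e : H) (bow : H → H → H → H → H) (j : FX X →+ H)
    (henv : IsUniversalDEnvelope (eElem X) e bow j)
    (a : X → H) (hadef : ∀ ξ, a ξ = j (aElem ξ))
    (c : X → X → H) (hcdef : ∀ ξ η, c ξ η = bow 0 (a ξ + a η - e) (a ξ) (a η)) :
    ∃ ι : H → H → H → H → H, IsInterpolator ι ∧
      ∀ Z : Set X, Z.Finite → Z.ncard ≤ 2 →
        ∀ x x' y y' : H, x ∈ Gsub e a c Z → x' ∈ Gsub e a c Z →
          y ∈ Gsub e a c Z → y' ∈ Gsub e a c Z →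
          ι x x' y y' ∈ Gsub e a c Z := by
  obtain ⟨E, hC⟩ := isCoordinateFamily_of_isUniversalDEnvelope henv hadef hcdef
  have hA := hC.isLocallyAtomic
  exact ⟨smoothInterpolator E (Gsub e a c) 2 bow,
    hA.isInterpolator_smoothInterpolator henv.1.2.2.2,
    fun Z hZ hZ2 _ _ _ _ => hA.smoothInterpolator_mem bow hZ hZ2⟩
end
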